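/- arXiv:1809.07211 — 3 statements merged into one kernel-verified Lean document; each statement's English description precedes it below -/
import Mathlib

section
/- Let X(t) = exp(tX) and Y(t) = exp(tY) with X = [[1/2,0],[0,-1/2]] and Y = [[0,1/2],[1/2,0]] in sl_2(C). Suppose a, b, a', b' are complex numbers and A, ε > 0 satisfy 2|a|e^{|b|+1} ≤ A, |b−b'| < ε, |a−a'| < ε|a|, and ε < min(1/e, 1/A). Then ‖Y(b)X(a)Y(−b) − Y(b')X(a')Y(−b')‖ ≤ 12·e^{A+|b|}·|a|·ε. -/
/-!
With `y = Y(b)`, `x = X(a)`, `z = Y(-b)` and `y z = 1` (likewise for the primed data),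
`y x z - y' x' z' = (y - y')(x - 1) z + y' (x - x') z + y' (x' - 1)(z - z')`.
Since `‖X‖ = ‖Y‖ = 1/2`, the mean value theorem makes `t ↦ exp (t • M)` Lipschitz with constant
`e^{T/2}/2` on `‖t‖ ≤ T`, while `‖exp (t • M)‖ ≤ e^{‖t‖/2}`. The hypotheses give
`‖b'‖ ≤ ‖b‖ + 1` and `‖a'‖ ≤ 2‖a‖`, so the three terms add up to at most
`(5/4) e^{‖b‖ + 1 + ‖a‖} ‖a‖ ε`, and `2‖a‖ ≤ A` turns this into the stated bound.
-/

noncomputable section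

/-- The (L²) operator norm of a complex 2×2 matrix. -/
def opNorm (M : Matrix (Fin 2) (Fin 2) ℂ) : ℝ :=
  ‖Matrix.toEuclideanCLM (𝕜 := ℂ) M‖

def Xm : Matrix (Fin 2) (Fin 2) ℂ := !![1/2, 0; 0, -1/2]
def Ym : Matrix (Fin 2) (Fin 2) ℂ := !![0, 1/2; 1/2, 0]

/-- X(t) = exp(tX). -/
def Xt (t : ℂ) : Matrix (Fin 2) (Fin 2) ℂ := NormedSpace.exp (t • Xm)
/-- Y(t) = exp(tY). -/
def Yt (t : ℂ) : Matrix (Fin 2) (Fin 2) ℂ := NormedSpace.exp (t • Ym)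

open NormedSpace
open scoped Matrix Matrix.Norms.L2Operator

theorem norm_exp_le_exp_norm (𝕂 : Type*) {𝔸 : Type*} [RCLike 𝕂] [NormedRing 𝔸] [NormOneClass 𝔸]
    [NormedAlgebra 𝕂 𝔸] (x : 𝔸) : ‖exp x‖ ≤ Real.exp ‖x‖ := by
  rw [exp_eq_tsum 𝕂, Real.exp_eq_exp_ℝ, exp_eq_tsum_div]
  refine (norm_tsum_le_tsum_norm (norm_expSeries_summable' x)).trans <|
    (norm_expSeries_summable' x).tsum_le_tsum (fun n => ?_) (Real.summable_pow_div_factorial ‖x‖)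
  rw [norm_smul, norm_inv, RCLike.norm_natCast, div_eq_inv_mul]
  gcongr
  exact norm_pow_le ..

theorem norm_exp_smul_sub_exp_smul_le {𝕂 𝔸 : Type*} [RCLike 𝕂] [NormedRing 𝔸] [NormOneClass 𝔸]
    [NormedAlgebra 𝕂 𝔸] [CompleteSpace 𝔸] (M : 𝔸) {s t : 𝕂} {T : ℝ} (hs : ‖s‖ ≤ T)
    (ht : ‖t‖ ≤ T) : ‖exp (s • M) - exp (t • M)‖ ≤ Real.exp (T * ‖M‖) * ‖M‖ * ‖s - t‖ := by
  refine (convex_closedBall (0 : 𝕂) T).norm_image_sub_le_of_norm_hasDerivWithin_le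
    (fun u _ => (hasDerivAt_exp_smul_const M u).hasDerivWithinAt) (fun u hu => ?_)
    (mem_closedBall_zero_iff.2 ht) (mem_closedBall_zero_iff.2 hs)
  calc ‖exp (u • M) * M‖ ≤ Real.exp ‖u • M‖ * ‖M‖ := by
        grw [norm_mul_le, norm_exp_le_exp_norm 𝕂 (u • M)]
    _ ≤ Real.exp (T * ‖M‖) * ‖M‖ := by
        grw [norm_smul, mem_closedBall_zero_iff.1 hu]

theorem norm_mul_mul_sub_mul_mul_le {R : Type*} [NormedRing R] {y y' z z' x x' : R}
    (hy : y * z = 1) (hy' : y' * z' = 1) :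
    ‖y * x * z - y' * x' * z'‖ ≤
      ‖y - y'‖ * ‖x - 1‖ * ‖z‖ + ‖y'‖ * ‖x - x'‖ * ‖z‖ + ‖y'‖ * ‖x' - 1‖ * ‖z - z'‖ := by
  have key : y * x * z - y' * x' * z' =
      (y - y') * (x - 1) * z + y' * (x - x') * z + y' * (x' - 1) * (z - z') := by
    have expand : (y - y') * (x - 1) * z + y' * (x - x') * z + y' * (x' - 1) * (z - z') =
        y * x * z - y' * x' * z' - y * z + y' * z' := by noncomm_ring
    rw [expand, hy, hy']
    abel
  rw [key]
  refine (norm_add₃_le ..).trans (add_le_add_three ?_ ?_ ?_) <;>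
    exact (norm_mul_le _ _).trans (mul_le_mul_of_nonneg_right (norm_mul_le _ _) (norm_nonneg _))

theorem Matrix.l2_opNorm_eq_of_conjTranspose_mul_self_eq {n : Type*} [Fintype n] [DecidableEq n]
    [Nonempty n] {M : Matrix n n ℂ} {r : ℝ} (hr : 0 ≤ r) (h : Mᴴ * M = ((r ^ 2 : ℝ) : ℂ) • 1) :
    ‖M‖ = r := by
  have hsq := Matrix.l2_opNorm_conjTranspose_mul_self M
  rw [h, norm_smul, norm_one, mul_one, Complex.norm_real, Real.norm_of_nonneg (by positivity)] at hsq
  nlinarith [norm_nonneg M]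

theorem norm_Xm : ‖Xm‖ = 1 / 2 := by
  refine Matrix.l2_opNorm_eq_of_conjTranspose_mul_self_eq (by norm_num) ?_
  ext i j
  fin_cases i <;> fin_cases j <;> simp [Xm, Matrix.mul_apply, map_ofNat] <;> norm_num

theorem norm_Ym : ‖Ym‖ = 1 / 2 := by
  refine Matrix.l2_opNorm_eq_of_conjTranspose_mul_self_eq (by norm_num) ?_
  ext i j
  fin_cases i <;> fin_cases j <;> simp [Ym, Matrix.mul_apply, map_ofNat] <;> norm_num

theorem Xt_zero : Xt 0 = 1 := by simp [Xt]

theorem Yt_mul_Yt_neg (t : ℂ) : Yt t * Yt (-t) = 1 := by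
  rw [Yt, Yt, ← Matrix.exp_add_of_commute _ _ (((Commute.refl Ym).smul_left t).smul_right (-t)),
    ← add_smul, add_neg_cancel, zero_smul, exp_zero]

theorem norm_Yt_le {t : ℂ} {T : ℝ} (ht : ‖t‖ ≤ T) : ‖Yt t‖ ≤ Real.exp (T / 2) := by
  grw [Yt, norm_exp_le_exp_norm ℂ, norm_smul, norm_Ym, ht, mul_one_div]

theorem norm_Yt_sub_Yt_le {s t : ℂ} {T : ℝ} (hs : ‖s‖ ≤ T) (ht : ‖t‖ ≤ T) :
    ‖Yt s - Yt t‖ ≤ Real.exp (T / 2) / 2 * ‖s - t‖ := by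
  simpa [Yt, norm_Ym, div_eq_mul_inv] using norm_exp_smul_sub_exp_smul_le Ym hs ht

theorem norm_Xt_sub_Xt_le {s t : ℂ} {T : ℝ} (hs : ‖s‖ ≤ T) (ht : ‖t‖ ≤ T) :
    ‖Xt s - Xt t‖ ≤ Real.exp (T / 2) / 2 * ‖s - t‖ := by
  simpa [Xt, norm_Xm, div_eq_mul_inv] using norm_exp_smul_sub_exp_smul_le Xm hs ht

theorem norm_Yt_Xt_Yt_sub_le {a a' b b' : ℂ} {S T : ℝ} (ha : ‖a‖ ≤ S) (ha' : ‖a'‖ ≤ S)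
    (hb : ‖b‖ ≤ T) (hb' : ‖b'‖ ≤ T) :
    ‖Yt b * Xt a * Yt (-b) - Yt b' * Xt a' * Yt (-b')‖ ≤
      Real.exp (T + S / 2) / 4 * ((‖a‖ + ‖a'‖) * ‖b - b'‖ + 2 * ‖a - a'‖) := by
  have hnb : ‖-b‖ ≤ T := by rwa [norm_neg]
  have hnb' : ‖-b'‖ ≤ T := by rwa [norm_neg]
  have h0 : ‖(0 : ℂ)‖ ≤ S := by simpa using (norm_nonneg a).trans ha
  set y := Real.exp (T / 2)
  set x := Real.exp (S / 2)
  calc ‖Yt b * Xt a * Yt (-b) - Yt b' * Xt a' * Yt (-b')‖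
      ≤ ‖Yt b - Yt b'‖ * ‖Xt a - Xt 0‖ * ‖Yt (-b)‖ + ‖Yt b'‖ * ‖Xt a - Xt a'‖ * ‖Yt (-b)‖
        + ‖Yt b'‖ * ‖Xt a' - Xt 0‖ * ‖Yt (-b) - Yt (-b')‖ := by
        simpa only [Xt_zero] using norm_mul_mul_sub_mul_mul_le (Yt_mul_Yt_neg b) (Yt_mul_Yt_neg b')
    _ ≤ y / 2 * ‖b - b'‖ * (x / 2 * ‖a - 0‖) * y + y * (x / 2 * ‖a - a'‖) * y
        + y * (x / 2 * ‖a' - 0‖) * (y / 2 * ‖-b - -b'‖) := by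
        gcongr
        exacts [norm_Yt_sub_Yt_le hb hb', norm_Xt_sub_Xt_le ha h0, norm_Yt_le hnb,
          norm_Yt_le hb', norm_Xt_sub_Xt_le ha ha', norm_Yt_le hnb, norm_Yt_le hb',
          norm_Xt_sub_Xt_le ha' h0, norm_Yt_sub_Yt_le hnb hnb']
    _ = Real.exp (T + S / 2) / 4 * ((‖a‖ + ‖a'‖) * ‖b - b'‖ + 2 * ‖a - a'‖) := by
        rw [show T + S / 2 = T / 2 + T / 2 + S / 2 by ring, Real.exp_add, Real.exp_add,
          sub_zero, sub_zero, ← neg_sub', norm_neg]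
        ring

theorem stmt3_general (a b a' b' : ℂ) (A ε : ℝ)
    (hA : 2 * ‖a‖ * Real.exp (‖b‖ + 1) ≤ A)
    (hb : ‖b - b'‖ < ε)
    (ha : ‖a - a'‖ < ε * ‖a‖)
    (hε : ε < min (1 / Real.exp 1) (1 / A)) :
    opNorm (Yt b * Xt a * Yt (-b) - Yt b' * Xt a' * Yt (-b')) ≤
      12 * Real.exp (A + ‖b‖) * ‖a‖ * ε := by
  set r := ‖a‖
  set B := ‖b‖
  have hε0 : 0 ≤ ε := (norm_nonneg _).trans hb.le
  have hε1 : ε ≤ 1 := hε.le.trans <| (min_le_left _ _).trans <|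
    div_le_one_of_le₀ (Real.one_le_exp zero_le_one) (Real.exp_pos 1).le
  have hrA : r ≤ A := by
    nlinarith [norm_nonneg a, Real.one_le_exp (by positivity : 0 ≤ B + 1)]
  have hb' : ‖b'‖ ≤ B + 1 := by linarith [norm_le_norm_add_norm_sub b b']
  have ha' : ‖a'‖ ≤ 2 * r := by nlinarith [norm_le_norm_add_norm_sub a a', norm_nonneg a]
  have hexp : Real.exp (B + 1 + 2 * r / 2) ≤ 3 * Real.exp (A + B) := by
    calc Real.exp (B + 1 + 2 * r / 2) ≤ Real.exp (1 + (A + B)) := Real.exp_le_exp.2 (by linarith)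
      _ ≤ 3 * Real.exp (A + B) := by
        rw [Real.exp_add]; gcongr; exact Real.exp_one_lt_d9.le.trans (by norm_num)
  rw [opNorm, ← Matrix.cstar_norm_def]
  calc ‖Yt b * Xt a * Yt (-b) - Yt b' * Xt a' * Yt (-b')‖
      ≤ Real.exp (B + 1 + 2 * r / 2) / 4 * ((r + ‖a'‖) * ‖b - b'‖ + 2 * ‖a - a'‖) :=
        norm_Yt_Xt_Yt_sub_le (by linarith [norm_nonneg a]) ha' (by linarith) hb'
    _ ≤ 3 * Real.exp (A + B) / 4 * ((r + 2 * r) * ε + 2 * (ε * r)) := by gcongr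
    _ ≤ 12 * Real.exp (A + B) * r * ε := by
        nlinarith [mul_nonneg (mul_nonneg (Real.exp_pos (A + B)).le (norm_nonneg a)) hε0]

theorem stmt3 (a b a' b' : ℂ) (A ε : ℝ) (hApos : 0 < A) (hεpos : 0 < ε)
    (hA : 2 * ‖a‖ * Real.exp (‖b‖ + 1) ≤ A)
    (hb : ‖b - b'‖ < ε)
    (ha : ‖a - a'‖ < ε * ‖a‖)
    (hε : ε < min (1 / Real.exp 1) (1 / A)) :
    opNorm (Yt b * Xt a * Yt (-b) - Yt b' * Xt a' * Yt (-b')) ≤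
      12 * Real.exp (A + ‖b‖) * ‖a‖ * ε :=
  stmt3_general a b a' b' A ε hA hb ha hε

end
end

section
/- Let (γ_i)_{i=0}^{n+1} be a linear sequence of geodesics in H^2. Let η_i be the common orthogonal of γ_i and γ_{i+1}, u_i = d(γ_i, γ_{i+1}), and v_i the signed distance along γ_i from η_{i−1} to η_i. Let D = d(γ_0, γ_{n+1}) and suppose u_0, u_n ≤ 1. Then |Σ_{i=1}^n v_i| ≤ D + 2·log D − log u_0 − log u_n + 3. -/
/- STATEMENT 10 (Lemma 4.4 "marching bound"): Let (γᵢ)_{i=0}^{n+1} be a linear sequence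
of geodesics in H², ηᵢ the common orthogonal of γᵢ and γ_{i+1}, uᵢ = d(γᵢ, γ_{i+1}),
and vᵢ the signed distance along γᵢ from η_{i−1} to ηᵢ.  Let D = d(γ₀, γ_{n+1}) and
suppose u₀, uₙ ≤ 1.  Then |Σ_{i=1}^n vᵢ| ≤ D + 2 log D − log u₀ − log uₙ + 3.

Formalization: as in the companion files, H² is Mathlib's `UpperHalfPlane`, geodesics
are unit-speed lines, and for each j ≤ n the common-orthogonal configuration of γⱼ and
γ_{j+1} — feet at parameters p j and q j, length u j > 0, consistent orientations —
is encoded by the distance formula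
cosh d(γⱼ(p j + s), γ_{j+1}(q j + t)) = cosh s cosh t cosh (u j) − sinh s sinh t.
Then vᵢ = p i − q (i−1) and D is the infimum (attained) of distances between γ₀ and
γ_{n+1}.  Separation is stated via paths. -/

open Real UpperHalfPlane

/-- A unit-speed parametrized complete geodesic in the hyperbolic plane. -/
def IsGeodesicLine (c : ℝ → UpperHalfPlane) : Prop :=
  ∀ s t : ℝ, dist (c s) (c t) = |s - t|

/-! Join the points of `γ₀` and `γ_{n+1}` at distance `D` by a geodesic segment. By separation
it meets every `γⱼ`, in order, so it splits into pieces of lengths `dⱼ`, `∑ dⱼ ≤ D`, each joining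
a point of `γⱼ` at offset `a` from the foot of `ηⱼ` to a point of `γ_{j+1}` at offset `b` from
the other foot. The distance formula for these two lines gives `|a - b| ≤ dⱼ` and
`sinh uⱼ cosh a, sinh uⱼ cosh b ≤ sinh dⱼ`. The sum `∑ vᵢ` regroups into the differences `b - a`
of the inner pieces plus the two outermost offsets, and the latter are controlled through
`u e^|a| ≤ 2 sinh u cosh a ≤ 2 sinh d ≤ 2 D e^d`. -/

lemma isGeodesicLine_of_cosh_dist {c : ℝ → ℍ}
    (h : ∀ s t, cosh (dist (c s) (c t)) = cosh (s - t)) : IsGeodesicLine c := by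
  intro s t
  have := h s t
  rw [← cosh_abs (s - t)] at this
  have h₁ := cosh_le_cosh.1 this.le
  have h₂ := cosh_le_cosh.1 this.ge
  rw [abs_abs, abs_of_nonneg dist_nonneg] at h₁ h₂
  exact le_antisymm h₁ h₂

lemma isGeodesicLine_vertical (x : ℝ) : IsGeodesicLine fun s => mk ⟨x, exp s⟩ (exp_pos s) :=
  fun s t => by rw [(isometry_vertical_line x).dist_eq, Real.dist_eq]

noncomputable def semicircleGeodesic (x₀ R : ℝ) (hR : 0 < R) (s : ℝ) : ℍ :=
  mk ⟨x₀ + R * tanh s, R / cosh s⟩ (div_pos hR (cosh_pos s))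

lemma isGeodesicLine_semicircleGeodesic (x₀ R : ℝ) (hR : 0 < R) :
    IsGeodesicLine (semicircleGeodesic x₀ R hR) := by
  refine isGeodesicLine_of_cosh_dist fun s t => ?_
  have hs := cosh_sq' s
  have ht := cosh_sq' t
  have := cosh_pos s
  have := cosh_pos t
  rw [cosh_dist, Complex.dist_eq, Complex.sq_norm, Complex.normSq_apply, cosh_sub]
  simp only [semicircleGeodesic, coe_mk, mk_im, Complex.sub_re, Complex.sub_im,
    tanh_eq_sinh_div_cosh]
  field_simp
  linear_combination R ^ 2 * (-cosh t ^ 2 * hs - cosh s ^ 2 * ht)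

lemma semicircleGeodesic_arsinh {x₀ R : ℝ} (hR : 0 < R) {z : ℍ}
    (hz : (z.re - x₀) ^ 2 + z.im ^ 2 = R ^ 2) :
    semicircleGeodesic x₀ R hR (arsinh ((z.re - x₀) / z.im)) = z := by
  have him := z.im_pos
  have hcosh : cosh (arsinh ((z.re - x₀) / z.im)) = R / z.im := by
    rw [cosh_arsinh, ← sqrt_sq (div_pos hR him).le]
    congr 1
    field_simp
    linear_combination hz
  apply ext_re_im <;>
    simp only [semicircleGeodesic, mk_re, mk_im, hcosh, tanh_eq_sinh_div_cosh, sinh_arsinh]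
  · field_simp; ring
  · field_simp

lemma IsGeodesicLine.isometry {c : ℝ → ℍ} (hc : IsGeodesicLine c) : Isometry c :=
  Isometry.of_dist_eq fun s t => by rw [hc, Real.dist_eq]

lemma IsGeodesicLine.exists_reparam {c : ℝ → ℍ} (hc : IsGeodesicLine c) (a b : ℝ) :
    ∃ c' : ℝ → ℍ, IsGeodesicLine c' ∧ c' 0 = c a ∧ c' (dist (c a) (c b)) = c b := by
  rcases le_total a b with hab | hba
  · refine ⟨fun s => c (a + s), fun s t => by rw [hc]; congr 1; ring, by simp, ?_⟩
    rw [hc, abs_of_nonpos (sub_nonpos.2 hab)]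
    ring_nf
  · refine ⟨fun s => c (a - s), fun s t => by rw [hc, abs_sub_comm]; congr 1; ring, by simp, ?_⟩
    rw [hc, abs_of_nonneg (sub_nonneg.2 hba)]
    ring_nf

lemma exists_isGeodesicLine (z w : ℍ) :
    ∃ c : ℝ → ℍ, IsGeodesicLine c ∧ c 0 = z ∧ c (dist z w) = w := by
  by_cases hre : z.re = w.re
  · have hpt : ∀ v : ℍ, v.re = z.re → mk ⟨z.re, exp (log v.im)⟩ (exp_pos _) = v := fun v hv =>
      ext_re_im (by simp [hv]) (by simp [exp_log v.im_pos])
    simpa only [hpt z rfl, hpt w hre.symm] using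
      (isGeodesicLine_vertical z.re).exists_reparam (log z.im) (log w.im)
  · -- the centre of the semicircle is where the perpendicular bisector of `z w` meets `ℝ`
    set x₀ := (z.re ^ 2 + z.im ^ 2 - w.re ^ 2 - w.im ^ 2) / (2 * (z.re - w.re))
    have hx₀ : (w.re - x₀) ^ 2 + w.im ^ 2 = (z.re - x₀) ^ 2 + z.im ^ 2 := by
      have : z.re - w.re ≠ 0 := sub_ne_zero.2 hre
      simp only [x₀]; field_simp; ring
    have hR : 0 < √((z.re - x₀) ^ 2 + z.im ^ 2) := sqrt_pos.2 (by have := z.im_pos; positivity)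
    have hR2 := sq_sqrt (by positivity : 0 ≤ (z.re - x₀) ^ 2 + z.im ^ 2)
    simpa only [semicircleGeodesic_arsinh hR hR2.symm,
      semicircleGeodesic_arsinh hR (hx₀.trans hR2.symm)] using
      (isGeodesicLine_semicircleGeodesic x₀ _ hR).exists_reparam
        (arsinh ((z.re - x₀) / z.im)) (arsinh ((w.re - x₀) / w.im))

lemma exists_mem_Icc_of_forall_path {X : Type*} [TopologicalSpace X] {c : ℝ → X}
    (hc : Continuous c) {a b : ℝ} (hab : a ≤ b) {T : Set X}
    (hT : ∀ f : Path (c a) (c b), ∃ r, f r ∈ T) : ∃ t ∈ Set.Icc a b, c t ∈ T := by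
  obtain ⟨r, hr⟩ := hT ((Path.segment a b).map hc)
  refine ⟨Path.segment a b r, ?_, hr⟩
  rw [← segment_eq_Icc hab, ← Path.range_segment]
  exact Set.mem_range_self r

theorem exists_monotone_crossings {X : Type*} [TopologicalSpace X] {c : ℝ → X}
    (hc : Continuous c) {N : ℕ} (S : Fin (N + 1) → Set X)
    (hS : ∀ i j k, j < i → i < k → ∀ x ∈ S j, ∀ y ∈ S k, ∀ f : Path x y, ∃ r, f r ∈ S i)
    {a b : ℝ} (hab : a ≤ b) (ha : c a ∈ S 0) (hb : c b ∈ S (Fin.last N)) :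
    ∃ τ : Fin (N + 1) → ℝ, Monotone τ ∧ (∀ i, τ i ∈ Set.Icc a b) ∧ ∀ i, c (τ i) ∈ S i := by
  induction N generalizing a with
  | zero => exact ⟨fun _ => a, monotone_const, fun _ => ⟨le_rfl, hab⟩, fun i => by
      rwa [Fin.fin_one_eq_zero i]⟩
  | succ N ih =>
    obtain ⟨t, ⟨hat, htb⟩, ht⟩ : ∃ t ∈ Set.Icc a b, c t ∈ S 1 := by
      rcases N.eq_zero_or_pos with rfl | hN
      · exact ⟨b, ⟨hab, le_rfl⟩, hb⟩
      · exact exists_mem_Icc_of_forall_path hc hab fun f =>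
          hS 1 0 (Fin.last _) Fin.zero_lt_one
            (by rw [Fin.lt_def, Fin.val_one, Fin.val_last]; omega) _ ha _ hb f
    obtain ⟨τ, hτ, hτab, hτS⟩ := ih (S ∘ Fin.succ)
      (fun i j k hji hik => hS i.succ j.succ k.succ (Fin.succ_lt_succ_iff.2 hji)
        (Fin.succ_lt_succ_iff.2 hik)) htb ht (by simpa using hb)
    refine ⟨Fin.cons a τ, ?_, Fin.cases ⟨le_rfl, hab⟩ fun i => ⟨hat.trans (hτab i).1, (hτab i).2⟩,
      Fin.cases ha hτS⟩
    intro i j hij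
    cases i using Fin.cases with
    | zero => cases j using Fin.cases with
      | zero => exact le_rfl
      | succ j => exact hat.trans (hτab j).1
    | succ i => cases j using Fin.cases with
      | zero => exact absurd hij (by simp)
      | succ j => exact hτ (Fin.succ_le_succ_iff.1 hij)

section CommonPerpendicular

variable {d a b u : ℝ}

lemma abs_le_of_cosh_eq (hd : 0 ≤ d)
    (h : cosh d = cosh a * cosh b * cosh u - sinh a * sinh b) : |u| ≤ d := by
  have hab : 1 ≤ cosh a * cosh b - sinh a * sinh b := by rw [← cosh_sub]; exact one_le_cosh _
  have hcc : 1 ≤ cosh a * cosh b := by nlinarith [one_le_cosh a, one_le_cosh b]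
  have hu : cosh u ≤ cosh d := by rw [h]; nlinarith [one_le_cosh u]
  simpa [abs_of_nonneg hd] using cosh_le_cosh.1 hu

lemma abs_sub_le_of_cosh_eq (hd : 0 ≤ d)
    (h : cosh d = cosh a * cosh b * cosh u - sinh a * sinh b) : |a - b| ≤ d := by
  have hab : cosh (a - b) ≤ cosh d := by
    rw [h, cosh_sub]; nlinarith [one_le_cosh u, mul_pos (cosh_pos a) (cosh_pos b)]
  simpa [abs_of_nonneg hd] using cosh_le_cosh.1 hab

lemma sinh_mul_cosh_le_of_cosh_eq (hd : 0 ≤ d)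
    (h : cosh d = cosh a * cosh b * cosh u - sinh a * sinh b) : sinh u * cosh a ≤ sinh d := by
  have key : sinh d ^ 2 = (sinh u * cosh a) ^ 2 +
      (cosh a * cosh u * sinh b - sinh a * cosh b) ^ 2 := by
    linear_combination (cosh d + (cosh a * cosh b * cosh u - sinh a * sinh b)) * h
      - cosh_sq' d + cosh_sq' a + cosh a ^ 2 * cosh_sq' u
      + (cosh a ^ 2 * cosh u ^ 2 - sinh a ^ 2) * cosh_sq' b
  refine (le_abs_self _).trans (abs_le_of_sq_le_sq ?_ (sinh_nonneg_iff.2 hd))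
  nlinarith [sq_nonneg (cosh a * cosh u * sinh b - sinh a * cosh b)]

end CommonPerpendicular

lemma sinh_le_mul_exp (d : ℝ) : sinh d ≤ d * exp d := by
  have h := add_one_le_exp (-(2 * d))
  have hexp : exp (-d) = exp d * exp (-(2 * d)) := by rw [← exp_add]; ring_nf
  rw [sinh_eq, hexp]
  nlinarith [exp_pos d]

lemma abs_le_of_sinh_mul_cosh_le {β d u D : ℝ} (hu : 0 < u) (hdD : d ≤ D)
    (h : sinh u * cosh β ≤ sinh d) : |β| ≤ d + log D + log 2 - log u := by
  have hβ : exp |β| ≤ 2 * cosh β := by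
    rw [← cosh_abs β, cosh_eq]; linarith [exp_pos (-|β|)]
  have key : u * exp |β| ≤ 2 * D * exp d := calc
    u * exp |β| ≤ sinh u * (2 * cosh β) :=
      mul_le_mul (self_le_sinh_iff.2 hu.le) hβ (exp_pos _).le (sinh_pos_iff.2 hu).le
    _ ≤ 2 * (d * exp d) := by linarith [sinh_le_mul_exp d]
    _ ≤ 2 * D * exp d := by nlinarith [exp_pos d]
  have hD : 0 < D := by
    by_contra! hD
    nlinarith [mul_pos hu (exp_pos |β|), exp_pos d]
  have := log_le_log (by positivity) key
  rw [log_mul hu.ne' (exp_pos _).ne', log_exp, log_mul (by positivity) (exp_pos _).ne',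
    log_exp, log_mul two_ne_zero hD.ne'] at this
  linarith

lemma Fin.sum_succ_sub_castSucc {M : Type*} [AddCommGroup M] {n : ℕ} (f : Fin (n + 1) → M) :
    ∑ i : Fin n, (f i.succ - f i.castSucc) = f (Fin.last n) - f 0 := by
  induction n with
  | zero => simp
  | succ n ih =>
    rw [Fin.sum_univ_castSucc]
    simp only [Fin.succ_castSucc]
    rw [ih (fun i => f i.castSucc)]
    simp

lemma abs_sum_castSucc_sub_succ_le {m : ℕ} (A B d : Fin (m + 2) → ℝ)
    (h : ∀ j, |B j - A j| ≤ d j) :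
    |∑ i : Fin (m + 1), (B i.castSucc - A i.succ)| + d 0 + d (Fin.last _) ≤
      |B 0| + |A (Fin.last _)| + ∑ j, d j := by
  have hsum : ∑ i : Fin (m + 1), (B i.castSucc - A i.succ) =
      B 0 - A (Fin.last _) + ∑ i : Fin m, (B i.succ.castSucc - A i.succ.castSucc) := by
    rw [Finset.sum_sub_distrib, Finset.sum_sub_distrib, Fin.sum_univ_succ (f := fun i => B _),
      Fin.sum_univ_castSucc (f := fun i => A _)]
    simp only [Fin.castSucc_zero, Fin.succ_last, Fin.succ_castSucc]
    ring
  have hd : ∑ j, d j = d 0 + ∑ i : Fin m, d i.succ.castSucc + d (Fin.last _) := by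
    rw [Fin.sum_univ_succ, Fin.sum_univ_castSucc]
    simp only [Fin.succ_last, Fin.succ_castSucc]
    ring
  have hmid : |∑ i : Fin m, (B i.succ.castSucc - A i.succ.castSucc)| ≤
      ∑ i : Fin m, d i.succ.castSucc :=
    (Finset.abs_sum_le_sum_abs _ _).trans (Finset.sum_le_sum fun i _ => h _)
  rw [hsum, hd]
  linarith [abs_add_le (B 0 - A (Fin.last _))
    (∑ i : Fin m, (B i.succ.castSucc - A i.succ.castSucc)), abs_sub (B 0) (A (Fin.last _))]

theorem abs_sum_le_of_cosh_eq {n : ℕ} (d A B u : Fin (n + 1) → ℝ) (hu : ∀ j, 0 < u j)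
    (hd : ∀ j, 0 ≤ d j) {D : ℝ} (hdD : ∑ j, d j ≤ D)
    (h : ∀ j, cosh (d j) = cosh (A j) * cosh (B j) * cosh (u j) - sinh (A j) * sinh (B j)) :
    |∑ i : Fin n, (B i.castSucc - A i.succ)| ≤
      D + 2 * log D - log (u 0) - log (u (Fin.last n)) + 2 * log 2 := by
  have hdD' : ∀ j, d j ≤ D := fun j =>
    (Finset.single_le_sum (fun i _ => hd i) (Finset.mem_univ j)).trans hdD
  rcases n with _ | m
  · have hu₀ := (le_abs_self _).trans ((abs_le_of_cosh_eq (hd 0) (h 0)).trans (hdD' 0))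
    have := log_le_log (hu 0) hu₀
    simp only [Finset.univ_eq_empty, Finset.sum_empty, abs_zero, Fin.last_zero]
    linarith [log_pos one_lt_two, hd 0, hdD' 0]
  · have hB₀ := abs_le_of_sinh_mul_cosh_le (hu 0) (hdD' 0)
      (sinh_mul_cosh_le_of_cosh_eq (a := B 0) (b := A 0) (hd 0) (by rw [h]; ring))
    have hAₙ := abs_le_of_sinh_mul_cosh_le (hu _) (hdD' _)
      (sinh_mul_cosh_le_of_cosh_eq (hd (Fin.last _)) (h _))
    linarith [abs_sum_castSucc_sub_succ_le A B d fun j => abs_sub_comm (B j) (A j) ▸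
      abs_sub_le_of_cosh_eq (hd j) (h j)]

theorem stmt10_general (n : ℕ) (γ : Fin (n + 2) → ℝ → UpperHalfPlane)
    (p q u : Fin (n + 1) → ℝ) (hu : ∀ j, 0 < u j)
    (hconn : ∀ j : Fin (n + 1), ∀ s t : ℝ,
      Real.cosh (dist (γ j.castSucc (p j + s)) (γ j.succ (q j + t))) =
        Real.cosh s * Real.cosh t * Real.cosh (u j) - Real.sinh s * Real.sinh t)
    (hsep : ∀ i j k : Fin (n + 2), j < i → i < k → ∀ (s t : ℝ)
      (f : Path (γ j s) (γ k t)), ∃ r, f r ∈ Set.range (γ i))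
    (D : ℝ)
    (hD₂ : ∃ s t : ℝ, dist (γ 0 s) (γ (Fin.last (n + 1)) t) = D) :
    |∑ i : Fin n, (p i.succ - q i.castSucc)| ≤
      D + 2 * Real.log D - Real.log (u 0) - Real.log (u (Fin.last n)) + 3 := by
  obtain ⟨s₀, t₀, hst⟩ := hD₂
  obtain ⟨c, hc, hc₀, hcD⟩ := exists_isGeodesicLine (γ 0 s₀) (γ (Fin.last (n + 1)) t₀)
  rw [hst] at hcD
  obtain ⟨τ, hτ, hτD, hτγ⟩ := exists_monotone_crossings hc.isometry.continuous
    (fun i => Set.range (γ i))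
    (fun i j k hji hik => by rintro _ ⟨s, rfl⟩ _ ⟨t, rfl⟩ f; exact hsep i j k hji hik s t f)
    (hst ▸ dist_nonneg) (hc₀ ▸ Set.mem_range_self _) (hcD ▸ Set.mem_range_self _)
  choose b hb using hτγ
  have hsum : ∑ i : Fin n, (p i.succ - q i.castSucc) = ∑ i : Fin n,
      ((b i.castSucc.succ - q i.castSucc) - (b i.succ.castSucc - p i.succ)) :=
    Finset.sum_congr rfl fun i _ => by rw [Fin.succ_castSucc]; ring
  have hcosh : ∀ j : Fin (n + 1), cosh (τ j.succ - τ j.castSucc) =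
      cosh (b j.castSucc - p j) * cosh (b j.succ - q j) * cosh (u j) -
        sinh (b j.castSucc - p j) * sinh (b j.succ - q j) := fun j => by
    have := hconn j (b j.castSucc - p j) (b j.succ - q j)
    rwa [add_sub_cancel, add_sub_cancel, hb, hb, hc, abs_sub_comm,
      abs_of_nonneg (sub_nonneg.2 (hτ (Fin.castSucc_le_succ j)))] at this
  have hdD : ∑ j : Fin (n + 1), (τ j.succ - τ j.castSucc) ≤ D := by
    rw [Fin.sum_succ_sub_castSucc]
    linarith [(hτD 0).1, (hτD (Fin.last _)).2]
  have hmarch := abs_sum_le_of_cosh_eq _ _ _ u hu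
    (fun j => sub_nonneg.2 (hτ (Fin.castSucc_le_succ j))) hdD hcosh
  rw [hsum]
  linarith [log_two_lt_d9]

theorem stmt10 (n : ℕ) (γ : Fin (n + 2) → ℝ → UpperHalfPlane)
    (hgeo : ∀ i, IsGeodesicLine (γ i))
    (p q u : Fin (n + 1) → ℝ) (hu : ∀ j, 0 < u j)
    (hconn : ∀ j : Fin (n + 1), ∀ s t : ℝ,
      Real.cosh (dist (γ j.castSucc (p j + s)) (γ j.succ (q j + t))) =
        Real.cosh s * Real.cosh t * Real.cosh (u j) - Real.sinh s * Real.sinh t)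
    (hsep : ∀ i j k : Fin (n + 2), j < i → i < k → ∀ (s t : ℝ)
      (f : Path (γ j s) (γ k t)), ∃ r, f r ∈ Set.range (γ i))
    (D : ℝ)
    (hD₁ : ∀ s t : ℝ, D ≤ dist (γ 0 s) (γ (Fin.last (n + 1)) t))
    (hD₂ : ∃ s t : ℝ, dist (γ 0 s) (γ (Fin.last (n + 1)) t) = D)
    (hu₀ : u 0 ≤ 1) (huₙ : u (Fin.last n) ≤ 1) :
    |∑ i : Fin n, (p i.succ - q i.castSucc)| ≤
      D + 2 * Real.log D - Real.log (u 0) - Real.log (u (Fin.last n)) + 3 :=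
  stmt10_general n γ p q u hu hconn hsep D hD₂
end

section
/- In a hyperbolic right-angled geodesic quadrilateral setup: for a right triangle in H^2 with legs meeting at a right angle, if one leg has length u ≤ 1, the hypotenuse has length at most D, and the other distance d(η, y_0) along the second geodesic satisfies tanh D ≥ tanh u · cosh d(η, y_0), then |d(η, y_0)| ≤ log 4 + log D − log u. -/
lemma sinh_le_mul_cosh {x : ℝ} (hx : 0 ≤ x) : Real.sinh x ≤ x * Real.cosh x := by
  have hmono : MonotoneOn (fun t : ℝ => t * Real.cosh t - Real.sinh t) (Set.Ici 0) := by
    apply monotoneOn_of_deriv_nonneg (convex_Ici 0)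
    · exact ((continuous_id.mul Real.continuous_cosh).sub Real.continuous_sinh).continuousOn
    · intro t _
      have : HasDerivAt (fun t : ℝ => t * Real.cosh t - Real.sinh t)
          (1 * Real.cosh t + t * Real.sinh t - Real.cosh t) t :=
        ((hasDerivAt_id t).mul (Real.hasDerivAt_cosh t)).sub (Real.hasDerivAt_sinh t)
      exact this.differentiableAt.differentiableWithinAt
    · intro t ht
      rw [interior_Ici] at ht
      have hd : HasDerivAt (fun t : ℝ => t * Real.cosh t - Real.sinh t)
          (1 * Real.cosh t + t * Real.sinh t - Real.cosh t) t :=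
        ((hasDerivAt_id t).mul (Real.hasDerivAt_cosh t)).sub (Real.hasDerivAt_sinh t)
      rw [hd.deriv]
      have ht' : 0 < t := ht
      have : 0 ≤ Real.sinh t := (Real.sinh_pos_iff.2 ht').le
      nlinarith
  have := hmono (Set.self_mem_Ici) (Set.mem_Ici.2 hx) hx
  simp only [Real.sinh_zero, Real.cosh_zero, mul_one, zero_mul, sub_zero] at this
  linarith

lemma tanh_le_self {x : ℝ} (hx : 0 ≤ x) : Real.tanh x ≤ x := by
  rw [Real.tanh_eq_sinh_div_cosh, div_le_iff₀ (Real.cosh_pos _)]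
  exact sinh_le_mul_cosh hx


/- STATEMENT 11: The hyperbolic right-triangle estimate used in the proof of the
marching bound: if 0 < u ≤ 1, 0 < D, and tanh D ≥ tanh u · cosh y (y being the signed
distance d(η, y₀) along the second geodesic, the right angle being at the foot), then
|y| ≤ log 4 + log D − log u. -/

theorem stmt11 (u D y : ℝ) (hu0 : 0 < u) (hu1 : u ≤ 1) (hD : 0 < D)
    (h : Real.tanh u * Real.cosh y ≤ Real.tanh D) :
    |y| ≤ Real.log 4 + Real.log D - Real.log u := by
  -- cosh u ≤ 2
  have hcoshu : Real.cosh u ≤ 2 := by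
    rw [Real.cosh_eq]
    have h1 : Real.exp u ≤ Real.exp 1 := Real.exp_le_exp.2 hu1
    have h2 : Real.exp (-u) ≤ 1 := Real.exp_le_one_iff.2 (by linarith)
    have h3 : Real.exp 1 < 2.7182818286 := Real.exp_one_lt_d9
    linarith
  -- tanh u ≥ u / 2
  have hsinhu : u ≤ Real.sinh u := (Real.self_lt_sinh_iff.2 hu0).le
  have htanhu : u / 2 ≤ Real.tanh u := by
    rw [Real.tanh_eq_sinh_div_cosh, le_div_iff₀ (Real.cosh_pos _)]
    nlinarith [Real.cosh_pos (x := u)]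
  have htanhu0 : 0 < Real.tanh u := lt_of_lt_of_le (by linarith) htanhu
  -- cosh y ≤ 2 D / u
  have h1 : Real.tanh D ≤ D := tanh_le_self hD.le
  have hcoshy : Real.cosh y ≤ 2 * D / u := by
    have h2 : Real.tanh u * Real.cosh y ≤ D := le_trans h h1
    rw [le_div_iff₀ hu0]
    have hcy : 0 < Real.cosh y := Real.cosh_pos y
    nlinarith
  -- exp |y| ≤ 2 cosh y
  have hexp : Real.exp |y| ≤ 2 * Real.cosh y := by
    rw [Real.cosh_eq]
    rcases abs_cases y with ⟨hy, _⟩ | ⟨hy, _⟩ <;> rw [hy] <;>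
      [nlinarith [Real.exp_pos (-y)]; nlinarith [Real.exp_pos y]]
  have hkey : Real.exp |y| ≤ 4 * D / u := by
    calc Real.exp |y| ≤ 2 * Real.cosh y := hexp
      _ ≤ 2 * (2 * D / u) := by linarith
      _ = 4 * D / u := by ring
  have := Real.log_le_log (Real.exp_pos _) hkey
  rw [Real.log_exp] at this
  calc |y| ≤ Real.log (4 * D / u) := this
    _ = Real.log 4 + Real.log D - Real.log u := by
        rw [Real.log_div (by positivity) (ne_of_gt hu0),
          Real.log_mul (by norm_num) (ne_of_gt hD)]
end
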